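/- arXiv:2302.07236 — 2 statements merged into one kernel-verified Lean document; each statement's English description precedes it below -/
import Mathlib

section
/- Let c be an even positive integer, say c = 2r, and let a, b be integers with gcd(a, c) = 1. If ar + b is odd, then the quadratic Gauss sum G(a, b; 2r) equals 0. -/
/-- `e(x) = exp(2πix)`. -/
noncomputable def e (x : ℝ) : ℂ := Complex.exp (2 * Real.pi * Complex.I * x)

/-- The quadratic Gauss sum `G(a,b;c) = ∑_{x mod c} e((a x² + b x)/c)`. -/
noncomputable def G (a b : ℤ) (c : ℕ) : ℂ :=
  ∑ x ∈ Finset.range c, e (((a * (x : ℤ) ^ 2 + b * (x : ℤ) : ℤ) : ℝ) / (c : ℝ))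

lemma e_add (x y : ℝ) : e (x + y) = e x * e y := by
  simp [e, mul_add, Complex.exp_add]

lemma e_int (n : ℤ) : e (n : ℝ) = 1 := by
  have : (2 : ℂ) * Real.pi * Complex.I * ((n : ℝ) : ℂ) = n * (2 * Real.pi * Complex.I) := by
    push_cast; ring
  rw [e, this, Complex.exp_int_mul_two_pi_mul_I]

lemma e_half : e (1 / 2) = -1 := by
  have : (2 : ℂ) * Real.pi * Complex.I * (((1 : ℝ) / 2 : ℝ) : ℂ) = Real.pi * Complex.I := by
    push_cast; ring
  rw [e, this, Complex.exp_pi_mul_I]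

theorem stmt0 (r : ℕ) (hr : 0 < r) (a b : ℤ) (hco : Int.gcd a (2 * (r : ℤ)) = 1)
    (hodd : Odd (a * (r : ℤ) + b)) : G a b (2 * r) = 0 := by
  obtain ⟨k, hk⟩ := hodd
  have hr' : ((2 * r : ℕ) : ℝ) ≠ 0 := by positivity
  have key : ∀ x : ℕ,
      e (((a * ((r + x : ℕ) : ℤ) ^ 2 + b * ((r + x : ℕ) : ℤ) : ℤ) : ℝ) / ((2 * r : ℕ) : ℝ))
      = - e (((a * (x : ℤ) ^ 2 + b * (x : ℤ) : ℤ) : ℝ) / ((2 * r : ℕ) : ℝ)) := by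
    intro x
    have hn : (a * ((r + x : ℕ) : ℤ) ^ 2 + b * ((r + x : ℕ) : ℤ) : ℤ)
        = (a * (x : ℤ) ^ 2 + b * (x : ℤ)) + 2 * (r : ℤ) * (a * (x : ℤ) + k) + (r : ℤ) := by
      push_cast
      linear_combination (r : ℤ) * hk
    have hsplit : (((a * ((r + x : ℕ) : ℤ) ^ 2 + b * ((r + x : ℕ) : ℤ) : ℤ)) : ℝ) / ((2 * r : ℕ) : ℝ)
        = ((a * (x : ℤ) ^ 2 + b * (x : ℤ) : ℤ) : ℝ) / ((2 * r : ℕ) : ℝ)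
          + (((a * (x : ℤ) + k : ℤ) : ℝ) + 1 / 2) := by
      rw [hn]
      have hrne : (r : ℝ) ≠ 0 := by positivity
      push_cast
      field_simp
      ring
    rw [hsplit, e_add, e_add, e_int, e_half]
    ring
  unfold G
  rw [two_mul, Finset.sum_range_add, ← two_mul]
  have : ∀ x ∈ Finset.range r,
      e (((a * ((r + x : ℕ) : ℤ) ^ 2 + b * ((r + x : ℕ) : ℤ) : ℤ) : ℝ) / ((2 * r : ℕ) : ℝ))
      = - e (((a * (x : ℤ) ^ 2 + b * (x : ℤ) : ℤ) : ℝ) / ((2 * r : ℕ) : ℝ)) := fun x _ => key x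
  rw [Finset.sum_congr rfl this, Finset.sum_neg_distrib]
  ring
end

section
/- Let p, A, B be positive integers. Then the number of quadruples (n₁, n₂, m₁, m₂) of positive integers satisfying A ≤ n₁ ≤ 2A, A ≤ n₂ ≤ 2A, B ≤ m₁ ≤ 2B, B ≤ m₂ ≤ 2B, and p n₁² − 4 m₁ = p n₂² − 4 m₂, is at most 100 · (B + 1) · (A + B/p + 1), where B/p denotes real division. -/
/-!
From `p n₁² - 4 m₁ = p n₂² - 4 m₂` we get `p (n₁ - n₂)(n₁ + n₂) = 4 (m₁ - m₂)`, and since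
`n₁ + n₂ ≥ 2A` and `|m₁ - m₂| ≤ B` this forces `|n₁ - n₂| ≤ D := ⌊2B / (Ap)⌋`. A solution is
determined by `n₁`, `n₂ - n₁` and `m₁`, so there are at most `(A + 1)(2D + 1)(B + 1)` of them,
and `(A + 1)(2D + 1) ≤ 8B/p + A + 1`.
-/

theorem mul_abs_sub_le_of_mul_sq_sub_eq {R : Type*} [CommRing R] [LinearOrder R]
    [IsStrictOrderedRing R] {p A B n₁ n₂ m₁ m₂ : R} (hp : 0 ≤ p)
    (hn₁ : A ≤ n₁) (hn₂ : A ≤ n₂) (hm : |m₁ - m₂| ≤ B)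
    (h : p * n₁ ^ 2 - 4 * m₁ = p * n₂ ^ 2 - 4 * m₂) :
    A * p * |n₁ - n₂| ≤ 2 * B := by
  have hfactor : p * |n₁ - n₂| * (n₁ + n₂) ≤ 4 * |m₁ - m₂| := by
    calc p * |n₁ - n₂| * (n₁ + n₂) ≤ p * |n₁ - n₂| * |n₁ + n₂| := by
          gcongr; exact le_abs_self _
      _ = |p * (n₁ - n₂) * (n₁ + n₂)| := by rw [abs_mul, abs_mul, abs_of_nonneg hp]
      _ = |4 * (m₁ - m₂)| := by congr 1; linear_combination h
      _ = 4 * |m₁ - m₂| := by rw [abs_mul, abs_of_pos four_pos]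
  have hpd : 0 ≤ p * |n₁ - n₂| := by positivity
  nlinarith

abbrev quadSet (p A B : ℕ) : Finset (ℕ × ℕ × ℕ × ℕ) :=
  (Finset.Icc A (2 * A) ×ˢ Finset.Icc A (2 * A) ×ˢ
      Finset.Icc B (2 * B) ×ˢ Finset.Icc B (2 * B)).filter
      (fun x : ℕ × ℕ × ℕ × ℕ =>
        (p : ℤ) * (x.1 : ℤ) ^ 2 - 4 * (x.2.2.1 : ℤ) =
          (p : ℤ) * (x.2.1 : ℤ) ^ 2 - 4 * (x.2.2.2 : ℤ))

theorem abs_sub_le_of_mem_quadSet {p A B : ℕ} (hp : 0 < p) (hA : 0 < A)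
    {x : ℕ × ℕ × ℕ × ℕ} (hx : x ∈ quadSet p A B) :
    |(x.1 : ℤ) - x.2.1| ≤ ((2 * B / (A * p) : ℕ) : ℤ) := by
  obtain ⟨n₁, n₂, m₁, m₂⟩ := x
  simp only [Finset.mem_filter, Finset.mem_product, Finset.mem_Icc] at hx
  obtain ⟨⟨⟨hn₁, -⟩, ⟨hn₂, -⟩, ⟨hm₁, hm₁'⟩, hm₂, hm₂'⟩, heq⟩ := hx
  have hm : |(m₁ : ℤ) - m₂| ≤ B := abs_le.2 ⟨by omega, by omega⟩
  have key := mul_abs_sub_le_of_mul_sq_sub_eq (Int.natCast_nonneg p)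
    (Int.ofNat_le.2 hn₁) (Int.ofNat_le.2 hn₂) hm heq
  rw [Int.natCast_div, Int.le_ediv_iff_mul_le (by positivity)]
  push_cast
  linarith

theorem card_quadSet_le_of_abs_sub_le {p A B D : ℕ}
    (hD : ∀ x ∈ quadSet p A B, |(x.1 : ℤ) - x.2.1| ≤ D) :
    (quadSet p A B).card ≤ (A + 1) * (2 * D + 1) * (B + 1) := by
  have hinj := Finset.card_le_card_of_injOn (s := quadSet p A B)
    (fun x : ℕ × ℕ × ℕ × ℕ => ((x.1 : ℤ), (x.2.1 : ℤ) - x.1, (x.2.2.1 : ℤ)))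
    (t := Finset.Icc (A : ℤ) (2 * A) ×ˢ Finset.Icc (-(D : ℤ)) D ×ˢ Finset.Icc (B : ℤ) (2 * B))
    ?_ ?_
  · simp only [Finset.card_product, Int.card_Icc] at hinj
    rwa [show (2 * (A : ℤ) + 1 - A).toNat = A + 1 by omega,
      show ((D : ℤ) + 1 - -D).toNat = 2 * D + 1 by omega,
      show (2 * (B : ℤ) + 1 - B).toNat = B + 1 by omega, ← mul_assoc] at hinj
  · intro x hx
    have := abs_le.1 (hD x hx)
    simp only [Finset.coe_filter, Set.mem_ofPred_eq, Finset.mem_product, Finset.mem_Icc] at hx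
    simp only [Finset.coe_product, Set.mem_prod, Finset.coe_Icc, Set.mem_Icc]
    omega
  · rintro ⟨n₁, n₂, m₁, m₂⟩ hx ⟨n₁', n₂', m₁', m₂'⟩ hy hxy
    simp only [Finset.coe_filter, Set.mem_ofPred_eq] at hx hy
    simp only [Prod.mk.injEq, Nat.cast_inj] at hxy ⊢
    obtain ⟨rfl, h₂, rfl⟩ := hxy
    obtain rfl : n₂ = n₂' := by omega
    refine ⟨rfl, rfl, rfl, ?_⟩
    linarith [hx.2, hy.2]

theorem add_one_mul_two_mul_div_add_one_le {p A B : ℕ} (hp : 0 < p) (hA : 0 < A) :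
    ((A : ℝ) + 1) * (2 * ((2 * B / (A * p) : ℕ) : ℝ) + 1) ≤ 8 * B / p + A + 1 := by
  set D : ℕ := 2 * B / (A * p)
  have hp' : (0 : ℝ) < p := by exact_mod_cast hp
  have hA' : (1 : ℝ) ≤ A := by exact_mod_cast hA
  have hDA : (D : ℝ) * A ≤ 2 * B / p := by
    rw [le_div_iff₀ hp', mul_assoc]
    exact_mod_cast Nat.div_mul_le_self (2 * B) (A * p)
  have hD : (0 : ℝ) ≤ D := D.cast_nonneg
  calc ((A : ℝ) + 1) * (2 * D + 1) ≤ 4 * (D * A) + A + 1 := by nlinarith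
    _ ≤ 4 * (2 * B / p) + A + 1 := by gcongr
    _ = 8 * B / p + A + 1 := by ring

theorem stmt12_general (p A B : ℕ) (hp : 0 < p) (hA : 0 < A) :
    (((Finset.Icc A (2 * A) ×ˢ Finset.Icc A (2 * A) ×ˢ
        Finset.Icc B (2 * B) ×ˢ Finset.Icc B (2 * B)).filter
        (fun x : ℕ × ℕ × ℕ × ℕ =>
          (p : ℤ) * (x.1 : ℤ) ^ 2 - 4 * (x.2.2.1 : ℤ) =
            (p : ℤ) * (x.2.1 : ℤ) ^ 2 - 4 * (x.2.2.2 : ℤ))).card : ℝ) ≤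
      100 * ((B : ℝ) + 1) * ((A : ℝ) + (B : ℝ) / (p : ℝ) + 1) := by
  have hcard := card_quadSet_le_of_abs_sub_le (B := B) fun x hx => abs_sub_le_of_mem_quadSet hp hA hx
  have hBp : (0 : ℝ) ≤ B / p := by positivity
  calc ((quadSet p A B).card : ℝ)
      ≤ ((A : ℝ) + 1) * (2 * ((2 * B / (A * p) : ℕ) : ℝ) + 1) * (B + 1) := by
        exact_mod_cast hcard
    _ ≤ (8 * B / p + A + 1) * (B + 1) := by
        gcongr; exact add_one_mul_two_mul_div_add_one_le hp hA
    _ ≤ 100 * ((B : ℝ) + 1) * (A + B / p + 1) := by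
        rw [mul_div_assoc]; nlinarith

theorem stmt12 (p A B : ℕ) (hp : 0 < p) (hA : 0 < A) (hB : 0 < B) :
    (((Finset.Icc A (2 * A) ×ˢ Finset.Icc A (2 * A) ×ˢ
        Finset.Icc B (2 * B) ×ˢ Finset.Icc B (2 * B)).filter
        (fun x : ℕ × ℕ × ℕ × ℕ =>
          (p : ℤ) * (x.1 : ℤ) ^ 2 - 4 * (x.2.2.1 : ℤ) =
            (p : ℤ) * (x.2.1 : ℤ) ^ 2 - 4 * (x.2.2.2 : ℤ))).card : ℝ) ≤
      100 * ((B : ℝ) + 1) * ((A : ℝ) + (B : ℝ) / (p : ℝ) + 1) :=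
  stmt12_general p A B hp hA
end
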